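/- arXiv:2208.08452 — 3 statements merged into one kernel-verified Lean document; each statement's English description precedes it below -/
import Mathlib

section
/- Define C^n_{α,β} = Σ_{k=0}^{n} C(k, (k+α)/2)·C(n-k, (n-k+β)/2), with binomial coefficients 0 when arguments are non-integer. Then for all nonnegative integers α, β with α+β fixed, C^n_{α,β} = C^n_{0,α+β}. -/
/-- `C(n, (n+α)/2)`, taken to be `0` when `(n+α)/2` is not an integer. -/
def hb (n α : ℕ) : ℚ := if (n + α) % 2 = 0 then (n.choose ((n + α) / 2) : ℚ) else 0

/-- The convolution `C^n_{α,β} = Σ_{k=0}^{n} C(k,(k+α)/2)·C(n-k,(n-k+β)/2)`. -/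
def Cconv (n α β : ℕ) : ℚ := ∑ k ∈ Finset.range (n + 1), hb k α * hb (n - k) β

lemma hb_zero_succ (α : ℕ) : hb 0 (α + 1) = 0 := by
  unfold hb
  split
  · next h =>
    have : Nat.choose 0 ((α + 1) / 2) = 0 := Nat.choose_eq_zero_of_lt (by omega)
    simpa using this
  · rfl

lemma hb_pascal (k α : ℕ) : hb (k + 1) (α + 1) = hb k α + hb k (α + 2) := by
  unfold hb
  have h1 : (k + 1 + (α + 1)) % 2 = (k + α) % 2 := by omega
  have h2 : (k + (α + 2)) % 2 = (k + α) % 2 := by omega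
  rcases Nat.even_or_odd (k + α) with h | h
  · have e0 : (k + α) % 2 = 0 := Nat.even_iff.mp h
    have d1 : (k + 1 + (α + 1)) / 2 = (k + α) / 2 + 1 := by omega
    have d2 : (k + (α + 2)) / 2 = (k + α) / 2 + 1 := by omega
    rw [h1, h2, e0, if_pos rfl, if_pos rfl, if_pos rfl, d1, d2]
    rw [Nat.choose_succ_succ]
    push_cast
    ring
  · have e1 : (k + α) % 2 = 1 := Nat.odd_iff.mp h
    rw [h1, h2, e1]
    norm_num

lemma Cconv_comm (n α β : ℕ) : Cconv n α β = Cconv n β α := by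
  unfold Cconv
  rw [← Finset.sum_range_reflect]
  apply Finset.sum_congr rfl
  intro k hk
  simp only [Finset.mem_range] at hk
  have e : n + 1 - 1 - k = n - k := by omega
  have e2 : n - (n - k) = k := by omega
  rw [e, e2, mul_comm]

lemma Cconv_rec_left (n α β : ℕ) :
    Cconv (n + 1) (α + 1) β = Cconv n α β + Cconv n (α + 2) β := by
  unfold Cconv
  rw [Finset.sum_range_succ' (fun k => hb k (α + 1) * hb (n + 1 - k) β)]
  rw [hb_zero_succ]
  simp only [zero_mul, add_zero]
  rw [← Finset.sum_add_distrib]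
  apply Finset.sum_congr rfl
  intro k hk
  have : n + 1 - (k + 1) = n - k := by omega
  rw [this, hb_pascal, add_mul]

lemma Cconv_rec_right (n α β : ℕ) :
    Cconv (n + 1) α (β + 1) = Cconv n α β + Cconv n α (β + 2) := by
  rw [Cconv_comm, Cconv_rec_left, Cconv_comm n β α, Cconv_comm n (β + 2) α]

lemma Cconv_shift (n : ℕ) : ∀ α β, Cconv n (α + 1) β = Cconv n α (β + 1) := by
  induction n with
  | zero =>
    intro α β
    unfold Cconv
    simp [hb_zero_succ, mul_comm]
  | succ n ih =>
    intro α β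
    rw [Cconv_rec_left, Cconv_rec_right]
    have h1 : Cconv n (α + 2) β = Cconv n (α + 1) (β + 1) := ih (α + 1) β
    have h2 : Cconv n (α + 1) (β + 1) = Cconv n α (β + 2) := ih α (β + 1)
    rw [h1, h2]

theorem Cconv_depends_only_on_sum (n α β : ℕ) : Cconv n α β = Cconv n 0 (α + β) := by
  induction α generalizing β with
  | zero => simp
  | succ α ih =>
    rw [Cconv_shift, ih (β + 1)]
    congr 1
    omega
end

section
/- Let C^n_δ = Σ_{k=0}^{n} C(k, k/2)·C(n-k, (n-k+δ)/2) (binomials with non-integer argument are 0). Then C^n_0 = 2^n if n is even and 0 if n is odd. -/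
/-- `C^n_δ = Σ_{k=0}^{n} C(k, k/2)·C(n-k, (n-k+δ)/2)`. -/
def Cd (n δ : ℕ) : ℚ := ∑ k ∈ Finset.range (n + 1), hb k 0 * hb (n - k) δ

/-- Closed form candidate. -/
def F (n δ : ℕ) : ℚ :=
  if (n + δ) % 2 = 0 ∧ δ ≤ n then ∑ j ∈ Finset.range ((n - δ) / 2 + 1), ((n + 1).choose j : ℚ)
  else 0

lemma sum_choose_succ (n s : ℕ) :
    ∑ j ∈ Finset.range (s + 1), ((n + 1).choose j : ℚ) =
      ∑ j ∈ Finset.range (s + 1), (n.choose j : ℚ) + ∑ j ∈ Finset.range s, (n.choose j : ℚ) := by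
  induction s with
  | zero => simp
  | succ s ih =>
    rw [Finset.sum_range_succ, ih, Finset.sum_range_succ (n := s + 1),
      Finset.sum_range_succ (f := fun j => (n.choose j : ℚ)) (n := s)]
    have : ((n + 1).choose (s + 1) : ℚ) = n.choose (s + 1) + n.choose s := by
      rw [Nat.choose_succ_succ]; push_cast; ring
    rw [this]; ring

lemma hb_zero (δ : ℕ) : hb 0 δ = if δ = 0 then 1 else 0 := by
  rcases Nat.eq_zero_or_pos δ with h | h
  · subst h; simp [hb]
  · have hz : hb 0 δ = 0 := by
      unfold hb
      by_cases hp : (0 + δ) % 2 = 0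
      · rw [if_pos hp, Nat.choose_eq_zero_of_lt (by omega)]; simp
      · rw [if_neg hp]
    rw [hz, if_neg (by omega)]

lemma hb_succ (m d : ℕ) : hb (m + 1) (d + 1) = hb m (d + 2) + hb m d := by
  unfold hb
  by_cases hp : (m + d) % 2 = 0
  · rw [if_pos (by omega), if_pos (by omega), if_pos hp]
    have hj : (m + 1 + (d + 1)) / 2 = (m + d) / 2 + 1 := by omega
    have hj2 : (m + (d + 2)) / 2 = (m + d) / 2 + 1 := by omega
    rw [hj, hj2, Nat.choose_succ_succ]
    push_cast; ring
  · rw [if_neg (by omega), if_neg (by omega), if_neg hp]; ring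

lemma hb_succ_zero (m : ℕ) : hb (m + 1) 0 = 2 * hb m 1 := by
  unfold hb
  by_cases hp : (m + 1) % 2 = 0
  · rw [if_pos (by omega), if_pos (by omega)]
    obtain ⟨t, rfl⟩ : ∃ t, m = 2 * t + 1 := ⟨m / 2, by omega⟩
    have h1 : (2 * t + 1 + 1 + 0) / 2 = t + 1 := by omega
    have h2 : (2 * t + 1 + 1) / 2 = t + 1 := by omega
    simp only [h1, h2]
    have key : (2 * t + 1 + 1).choose (t + 1) = 2 * (2 * t + 1).choose (t + 1) := by
      rw [Nat.choose_succ_succ (2 * t + 1) t]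
      have hsym : (2 * t + 1).choose t = (2 * t + 1).choose (t + 1) := by
        rw [← Nat.choose_symm (by omega : t + 1 ≤ 2 * t + 1)]
        congr 1; omega
      simp only [Nat.succ_eq_add_one]
      omega
    rw [key]; push_cast; ring
  · rw [if_neg (by omega), if_neg (by omega)]; ring

lemma Cd_succ (n δ : ℕ) :
    Cd (n + 1) δ
      = (∑ k ∈ Finset.range (n + 1), hb k 0 * hb (n - k + 1) δ) + hb (n + 1) 0 * hb 0 δ := by
  unfold Cd
  rw [Finset.sum_range_succ, Nat.sub_self]
  congr 1
  apply Finset.sum_congr rfl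
  intro k hk
  have h : n + 1 - k = n - k + 1 := by
    have := Finset.mem_range.mp hk; omega
  rw [h]

lemma F_succ (n d : ℕ) : F (n + 1) (d + 1) = F n (d + 2) + F n d := by
  unfold F
  by_cases hp : (n + d) % 2 = 0
  · by_cases hle : d + 2 ≤ n
    · rw [if_pos ⟨by omega, by omega⟩, if_pos ⟨by omega, by omega⟩, if_pos ⟨by omega, by omega⟩]
      have e1 : (n + 1 - (d + 1)) / 2 = (n - d) / 2 := by omega
      have e2 : (n - (d + 2)) / 2 + 1 = (n - d) / 2 := by omega
      rw [e1, e2, sum_choose_succ (n + 1) ((n - d) / 2)]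
      ring
    · by_cases hle2 : d ≤ n
      · have hnd : n = d := by omega
        rw [if_pos ⟨by omega, by omega⟩, if_neg (by omega), if_pos ⟨by omega, by omega⟩]
        have e1 : (n + 1 - (d + 1)) / 2 = 0 := by omega
        have e2 : (n - d) / 2 = 0 := by omega
        rw [e1, e2]; simp
      · rw [if_neg (by omega), if_neg (by omega), if_neg (by omega)]; ring
  · rw [if_neg (by omega), if_neg (by omega), if_neg (by omega)]; ring

lemma F_succ_zero (n : ℕ) : F (n + 1) 0 = 2 * F n 1 + hb (n + 1) 0 := by
  unfold F hb
  by_cases hp : (n + 1) % 2 = 0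
  · rw [if_pos ⟨by omega, by omega⟩, if_pos ⟨by omega, by omega⟩, if_pos (by omega)]
    have ht : (n + 1 - 0) / 2 = (n - 1) / 2 + 1 := by omega
    have ht2 : (n + 1 + 0) / 2 = (n - 1) / 2 + 1 := by omega
    have ht3 : (n - 1) / 2 + 1 = (n + 1) / 2 := by omega
    rw [ht, ht2, sum_choose_succ (n + 1) ((n - 1) / 2 + 1),
      Finset.sum_range_succ (f := fun j => ((n + 1).choose j : ℚ)) (n := (n - 1) / 2 + 1)]
    ring
  · rw [if_neg (by omega), if_neg (by omega), if_neg (by omega)]; ring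

lemma Cd_eq_F : ∀ n δ, Cd n δ = F n δ := by
  intro n
  induction n with
  | zero =>
    intro δ
    unfold Cd F
    rw [Finset.sum_range_one, Nat.sub_self, hb_zero, hb_zero]
    rcases Nat.eq_zero_or_pos δ with h | h
    · subst h; simp
    · rw [if_neg (fun hc : (0 + δ) % 2 = 0 ∧ δ ≤ 0 => by omega), if_neg (by omega : ¬ δ = 0)]; ring
  | succ n ih =>
    intro δ
    cases δ with
    | zero =>
      rw [Cd_succ, F_succ_zero, hb_zero, if_pos rfl, mul_one]
      have : ∀ k ∈ Finset.range (n + 1),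
          hb k 0 * hb (n - k + 1) 0 = 2 * (hb k 0 * hb (n - k) 1) := by
        intro k _; rw [hb_succ_zero]; ring
      rw [Finset.sum_congr rfl this, ← Finset.mul_sum, ← Cd, ih 1]
    | succ d =>
      rw [Cd_succ, F_succ, hb_zero, if_neg (by omega), mul_zero, add_zero]
      have : ∀ k ∈ Finset.range (n + 1),
          hb k 0 * hb (n - k + 1) (d + 1)
            = hb k 0 * hb (n - k) (d + 2) + hb k 0 * hb (n - k) d := by
        intro k _; rw [hb_succ]; ring
      rw [Finset.sum_congr rfl this, Finset.sum_add_distrib, ← Cd, ← Cd, ih (d + 2), ih d]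

theorem Cd_zero (n : ℕ) : Cd n 0 = if Even n then (2 : ℚ) ^ n else 0 := by
  rw [Cd_eq_F]
  unfold F
  by_cases he : Even n
  · obtain ⟨m, hm⟩ := he
    rw [if_pos ⟨by omega, by omega⟩, if_pos ⟨m, hm⟩]
    have e1 : (n - 0) / 2 = m := by omega
    have e2 : n + 1 = 2 * m + 1 := by omega
    rw [e1, e2]
    have h4 : (∑ j ∈ Finset.range (m + 1), ((2 * m + 1).choose j : ℚ)) = (4 : ℚ) ^ m := by
      have := Nat.sum_range_choose_halfway m
      exact_mod_cast congrArg (Nat.cast : ℕ → ℚ) this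
    rw [h4]
    have : (4 : ℚ) ^ m = (2 : ℚ) ^ n := by
      rw [show (4 : ℚ) = 2 ^ 2 by norm_num, ← pow_mul]
      congr 1; omega
    exact this
  · rw [if_neg (by rw [Nat.even_iff] at he; omega), if_neg he]
end

section
/- Let C^n_δ be the binomial convolution Σ_{k=0}^{n} C(k, k/2)·C(n-k, (n-k+δ)/2). Then C^n_2 = C^n_0 − (1/2)·C(n+2, (n+2)/2). -/
lemma hb_zero' (α : ℕ) (h : α ≠ 0) : hb 0 α = 0 := by
  simp only [hb]
  split_ifs with hp
  · have h1 : (0 : ℕ) < (0 + α) / 2 := by omega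
    rw [Nat.choose_eq_zero_of_lt h1, Nat.cast_zero]
  · rfl

lemma hb_pascal_s13 (n δ : ℕ) : hb (n + 1) (δ + 1) = hb n (δ + 2) + hb n δ := by
  simp only [hb]
  split_ifs with h1 h2 h3 <;> try omega
  · have k1 : (n + 1 + (δ + 1)) / 2 = (n + δ) / 2 + 1 := by omega
    have k2 : (n + (δ + 2)) / 2 = (n + δ) / 2 + 1 := by omega
    rw [k1, k2]
    have : (n + 1).choose ((n + δ) / 2 + 1)
        = n.choose ((n + δ) / 2 + 1) + n.choose ((n + δ) / 2) := by
      simp only [Nat.choose_succ_succ, Nat.succ_eq_add_one]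
      omega
    exact_mod_cast this
  · simp

lemma hb_double (n : ℕ) : hb (n + 1) 0 = 2 * hb n 1 := by
  simp only [hb]
  split_ifs with h1 _h2 <;> try omega
  · obtain ⟨m, rfl⟩ : ∃ m, n = 2 * m + 1 := ⟨n / 2, by omega⟩
    have k1 : (2 * m + 1 + 1 + 0) / 2 = m + 1 := by omega
    have k2 : (2 * m + 1 + 1) / 2 = m + 1 := by omega
    rw [k1]
    have hsym : (2 * m + 1).choose m = (2 * m + 1).choose (m + 1) := by
      have := Nat.choose_symm (show m + 1 ≤ 2 * m + 1 by omega)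
      simpa only [show 2 * m + 1 - (m + 1) = m by omega] using this
    have : (2 * m + 1 + 1).choose (m + 1) = 2 * (2 * m + 1).choose (m + 1) := by
      simp only [Nat.choose_succ_succ, Nat.succ_eq_add_one, hsym]
      omega
    exact_mod_cast this
  · simp

lemma Cd_succ_s13 (n δ : ℕ) : Cd (n + 1) (δ + 1) = Cd n (δ + 2) + Cd n δ := by
  simp only [Cd]
  rw [Finset.sum_range_succ, Nat.sub_self, hb_zero' _ (by omega), mul_zero, add_zero,
    ← Finset.sum_add_distrib]
  apply Finset.sum_congr rfl
  intro k hk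
  rw [Finset.mem_range] at hk
  rw [show n + 1 - k = (n - k) + 1 by omega, hb_pascal_s13, mul_add]

lemma Cd_succ_zero (n : ℕ) : Cd (n + 1) 0 = hb (n + 1) 0 + 2 * Cd n 1 := by
  simp only [Cd]
  rw [Finset.sum_range_succ, Nat.sub_self,
    show hb 0 0 = 1 by simp [hb], mul_one, Finset.mul_sum, add_comm]
  congr 1
  apply Finset.sum_congr rfl
  intro k hk
  rw [Finset.mem_range] at hk
  rw [show n + 1 - k = (n - k) + 1 by omega, hb_double]
  ring

lemma Cd_sub (n : ℕ) : ∀ δ, Cd n δ - Cd n (δ + 2) = hb (n + 1) (δ + 1) := by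
  induction n with
  | zero =>
    have h0 : ∀ α, Cd 0 α = hb 0 α := by
      intro α
      simp only [Cd, Nat.zero_add, Finset.sum_range_one, Nat.sub_self]
      rw [show hb 0 0 = 1 by simp [hb], one_mul]
    intro δ
    cases δ with
    | zero =>
      rw [h0, h0, hb_zero' 2 (by omega)]
      norm_num [hb]
    | succ δ' =>
      rw [h0, h0, hb_pascal_s13, hb_zero' (δ' + 1) (by omega),
        hb_zero' (δ' + 1 + 2) (by omega)]
      ring
  | succ m ih =>
    intro δ
    cases δ with
    | zero =>
      rw [Cd_succ_zero, Cd_succ_s13, hb_pascal_s13]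
      have h13 := ih 1
      linarith [h13]
    | succ δ' =>
      rw [Cd_succ_s13, Cd_succ_s13, hb_pascal_s13]
      have h1 := ih δ'
      have h2 := ih (δ' + 2)
      linarith [h1, h2]

theorem Cd_two (n : ℕ) :
    Cd n 2 = Cd n 0 - (1 / 2) *
      (if Even n then ((n + 2).choose ((n + 2) / 2) : ℚ) else 0) := by
  have h : Cd n 0 - Cd n 2 = hb (n + 1) 1 := by
    have := Cd_sub n 0
    simpa using this
  have hd : hb (n + 1 + 1) 0 = 2 * hb (n + 1) 1 := hb_double (n + 1)
  have heq : (if Even n then ((n + 2).choose ((n + 2) / 2) : ℚ) else 0)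
      = hb (n + 2) 0 := by
    simp only [hb, Nat.add_zero]
    by_cases he : Even n
    · have h2 : n % 2 = 0 := Nat.even_iff.mp he
      rw [if_pos he, if_pos (by omega : (n + 2) % 2 = 0)]
    · have h2 : n % 2 = 1 := Nat.not_even_iff.mp he
      rw [if_neg he, if_neg (by omega : ¬(n + 2) % 2 = 0)]
  rw [heq, show n + 2 = n + 1 + 1 from rfl, hd]
  linarith [h]
end
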